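/- Let n, m, d be positive integers, f : ℝⁿ × ℝᵈ → ℝⁿ and h : ℝⁿ × ℝᵈ → ℝᵐ differentiable in their first argument, R an m×m symmetric positive definite matrix, u ∈ ℝᵈ, y ∈ ℝᵐ, α ≥ 0, and η_prev, η reals with 0 < η < 1, η_prev > 0, and 1/η = 1/((1+α)η_prev) + 1. Let s ∈ ℝⁿ and let P be an n×n symmetric positive definite matrix, and set J := η_prev P⁻¹. Define one step of the pure fading-memory extended Kalman filter: s_pred := f(s, u); F := the Jacobian of f in its first argument at (s, u), assumed invertible; P_pred := (1+α) F P Fᵀ; ŷ := h(s_pred, u); H := the Jacobian of h in its first argument at (s_pred, u); K := P_pred Hᵀ (H P_pred Hᵀ + R)⁻¹; P₊ := (I − K H) P_pred; s₊ := s_pred + K (y − ŷ). Define one step of the online natural gradient: J' := (F⁻¹)ᵀ J F⁻¹; J₊ := (1−η) J' + η Hᵀ R⁻¹ H; σ₊ := s_pred + η J₊⁻¹ Hᵀ R⁻¹ (y − ŷ). Then J₊ is symmetric positive definite, P₊ = η J₊⁻¹, and s₊ = σ₊. -/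

import Mathlib

open Matrix

/-- The Jacobian matrix of a map `g : ℝⁿ → ℝᵐ` at a point `x`. -/
noncomputable def jacobian {n m : ℕ} (g : (Fin n → ℝ) → (Fin m → ℝ)) (x : Fin n → ℝ) :
    Matrix (Fin m) (Fin n) ℝ :=
  LinearMap.toMatrix' (fderiv ℝ g x).toLinearMap

/-!
The natural-gradient information matrix is, up to the factor `η`, the inverse covariance of the
filter. Transporting `J = ηprev P⁻¹` to the new chart gives `J' = ηprev (F P Fᵀ)⁻¹`, and the
hyperparameter relation `(1 - η) ηprev = η / (1 + α)` turns the forgetting term `(1 - η) J'`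
into `η P_pred⁻¹`, so `J₊ = η (P_pred⁻¹ + Hᵀ R⁻¹ H)`. The Kalman update is the covariance form
of this information update: `(I - K H) P_pred = (P_pred⁻¹ + Hᵀ R⁻¹ H)⁻¹` and
`K = (P_pred⁻¹ + Hᵀ R⁻¹ H)⁻¹ Hᵀ R⁻¹`, which give `P₊ = η J₊⁻¹` and `s₊ = σ₊`.
-/

namespace Matrix

section Field

variable {𝕜 ι : Type*} [Field 𝕜] [Fintype ι] [DecidableEq ι]

theorem inv_smul_of_ne_zero {A : Matrix ι ι 𝕜} (hA : IsUnit A.det) {c : 𝕜} (hc : c ≠ 0) :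
    (c • A)⁻¹ = c⁻¹ • A⁻¹ :=
  inv_eq_left_inv <| by rw [smul_mul_smul_comm, inv_mul_cancel₀ hc, nonsing_inv_mul A hA, one_smul]

theorem transpose_inv_mul_inv_mul_inv (F M : Matrix ι ι 𝕜) :
    (F⁻¹)ᵀ * M⁻¹ * F⁻¹ = (F * M * Fᵀ)⁻¹ := by
  rw [mul_inv_rev, mul_inv_rev, transpose_nonsing_inv, mul_assoc]

end Field

section Real

variable {ι κ : Type*} [Fintype ι] [Fintype κ]

theorem PosDef.mul_mul_transpose_of_isUnit [DecidableEq ι] {P F : Matrix ι ι ℝ} (hP : P.PosDef)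
    (hF : IsUnit F) : (F * P * Fᵀ).PosDef := by
  simpa [star_eq_conjTranspose] using hF.posDef_star_right_conjugate_iff.mpr hP

theorem PosDef.inv_add_transpose_mul_inv_mul [DecidableEq ι] [DecidableEq κ] {P : Matrix ι ι ℝ}
    {R : Matrix κ κ ℝ} (hP : P.PosDef) (hR : R.PosDef) (H : Matrix κ ι ℝ) :
    (P⁻¹ + Hᵀ * R⁻¹ * H).PosDef := by
  simpa using hP.inv.add_posSemidef (hR.inv.posSemidef.conjTranspose_mul_mul_same H)

theorem PosDef.mul_mul_transpose_add {P : Matrix ι ι ℝ} {R : Matrix κ κ ℝ} (hP : P.PosDef)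
    (hR : R.PosDef) (H : Matrix κ ι ℝ) : (H * P * Hᵀ + R).PosDef := by
  simpa using PosDef.posSemidef_add (hP.posSemidef.mul_mul_conjTranspose_same H) hR

end Real

end Matrix

section Kalman

variable {𝕜 ι κ : Type*} [Field 𝕜] [Fintype ι] [DecidableEq ι] [Fintype κ] [DecidableEq κ]

noncomputable def kalmanGain (P : Matrix ι ι 𝕜) (H : Matrix κ ι 𝕜) (R : Matrix κ κ 𝕜) :
    Matrix ι κ 𝕜 :=
  P * Hᵀ * (H * P * Hᵀ + R)⁻¹

variable {P : Matrix ι ι 𝕜} {H : Matrix κ ι 𝕜} {R : Matrix κ κ 𝕜}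

theorem kalman_posterior_mul_transpose_mul_inv (hR : IsUnit R.det)
    (hS : IsUnit (H * P * Hᵀ + R).det) :
    (1 - kalmanGain P H R * H) * P * Hᵀ * R⁻¹ = kalmanGain P H R := by
  have hKS : kalmanGain P H R * (H * P * Hᵀ + R) = P * Hᵀ := by
    rw [kalmanGain, Matrix.mul_assoc, nonsing_inv_mul _ hS, Matrix.mul_one]
  set K := kalmanGain P H R
  have hKR : (1 - K * H) * (P * Hᵀ) = K * R := by
    have hKH : K * H * (P * Hᵀ) = K * (H * P * Hᵀ) := by simp only [Matrix.mul_assoc]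
    rw [Matrix.sub_mul, Matrix.one_mul, hKH, ← hKS, Matrix.mul_add, add_sub_cancel_left]
  calc (1 - K * H) * P * Hᵀ * R⁻¹ = K * R * R⁻¹ := by rw [← hKR]; simp only [Matrix.mul_assoc]
    _ = K := by rw [Matrix.mul_assoc, mul_nonsing_inv R hR, Matrix.mul_one]

theorem kalman_posterior_eq_inv_information (hP : IsUnit P.det) (hR : IsUnit R.det)
    (hS : IsUnit (H * P * Hᵀ + R).det) :
    (1 - kalmanGain P H R * H) * P = (P⁻¹ + Hᵀ * R⁻¹ * H)⁻¹ := by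
  refine (inv_eq_left_inv ?_).symm
  rw [mul_add, mul_assoc _ P, mul_nonsing_inv P hP, mul_one, ← Matrix.mul_assoc,
    ← Matrix.mul_assoc, kalman_posterior_mul_transpose_mul_inv hR hS, sub_add_cancel]

theorem kalmanGain_eq_inv_information_mul (hP : IsUnit P.det) (hR : IsUnit R.det)
    (hS : IsUnit (H * P * Hᵀ + R).det) :
    kalmanGain P H R = (P⁻¹ + Hᵀ * R⁻¹ * H)⁻¹ * Hᵀ * R⁻¹ := by
  rw [← kalman_posterior_eq_inv_information hP hR hS, kalman_posterior_mul_transpose_mul_inv hR hS]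

end Kalman

theorem one_sub_mul_eq_div_of_one_div_eq {η ηprev c : ℝ} (hη : η ≠ 0) (hηprev : ηprev ≠ 0)
    (hc : c ≠ 0) (hrec : 1 / η = 1 / (c * ηprev) + 1) : (1 - η) * ηprev = η / c := by
  field_simp at hrec ⊢
  linear_combination hrec

theorem ekf_step_is_natural_gradient_step_general
    (n m : ℕ)
    (R : Matrix (Fin m) (Fin m) ℝ) (hR : R.PosDef)
    (y : Fin m → ℝ)
    (α : ℝ) (hα : 0 ≤ α)
    (ηprev η : ℝ) (hηprev : 0 < ηprev) (hη0 : 0 < η)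
    (hηrec : 1 / η = 1 / ((1 + α) * ηprev) + 1)
    (P : Matrix (Fin n) (Fin n) ℝ) (hP : P.PosDef)
    (J : Matrix (Fin n) (Fin n) ℝ) (hJ : J = ηprev • P⁻¹)
    -- one step of the pure fading-memory extended Kalman filter
    (spred : Fin n → ℝ)
    (F : Matrix (Fin n) (Fin n) ℝ)
    (hFinv : IsUnit F)
    (Ppred : Matrix (Fin n) (Fin n) ℝ) (hPpred : Ppred = (1 + α) • (F * P * Fᵀ))
    (yhat : Fin m → ℝ)
    (H : Matrix (Fin m) (Fin n) ℝ)
    (K : Matrix (Fin n) (Fin m) ℝ) (hK : K = Ppred * Hᵀ * (H * Ppred * Hᵀ + R)⁻¹)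
    (Pplus : Matrix (Fin n) (Fin n) ℝ) (hPplus : Pplus = (1 - K * H) * Ppred)
    (splus : Fin n → ℝ) (hsplus : splus = spred + K.mulVec (y - yhat))
    -- one step of the online natural gradient
    (J' : Matrix (Fin n) (Fin n) ℝ) (hJ' : J' = (F⁻¹)ᵀ * J * F⁻¹)
    (Jplus : Matrix (Fin n) (Fin n) ℝ)
    (hJplus : Jplus = (1 - η) • J' + η • (Hᵀ * R⁻¹ * H))
    (σplus : Fin n → ℝ)
    (hσplus : σplus = spred + η • (Jplus⁻¹ * Hᵀ * R⁻¹).mulVec (y - yhat)) :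
    Jplus.PosDef ∧ Pplus = η • Jplus⁻¹ ∧ splus = σplus := by
  have hα1 : 0 < 1 + α := by linarith
  have hFPF := hP.mul_mul_transpose_of_isUnit hFinv
  have hPpredPD : Ppred.PosDef := hPpred ▸ hFPF.smul hα1
  have hPpred_det : IsUnit Ppred.det := hPpredPD.det_pos.ne'.isUnit
  have hR_det : IsUnit R.det := hR.det_pos.ne'.isUnit
  have hS_det : IsUnit (H * Ppred * Hᵀ + R).det :=
    (hPpredPD.mul_mul_transpose_add hR H).det_pos.ne'.isUnit
  have hI := hPpredPD.inv_add_transpose_mul_inv_mul hR H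
  have hforget : (1 - η) • J' = η • Ppred⁻¹ := by
    rw [hJ', hJ, Matrix.mul_smul, Matrix.smul_mul, transpose_inv_mul_inv_mul_inv, smul_smul,
      one_sub_mul_eq_div_of_one_div_eq hη0.ne' hηprev.ne' hα1.ne' hηrec, hPpred,
      inv_smul_of_ne_zero hFPF.det_pos.ne'.isUnit hα1.ne', smul_smul, div_eq_mul_inv]
  have hJplus_eq : Jplus = η • (Ppred⁻¹ + Hᵀ * R⁻¹ * H) := by
    rw [hJplus, hforget, smul_add]
  have hη_inv : η • Jplus⁻¹ = (Ppred⁻¹ + Hᵀ * R⁻¹ * H)⁻¹ := by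
    rw [hJplus_eq, inv_smul_of_ne_zero hI.det_pos.ne'.isUnit hη0.ne', smul_smul,
      mul_inv_cancel₀ hη0.ne', one_smul]
  rw [show K = kalmanGain Ppred H R from hK] at hPplus hsplus
  refine ⟨hJplus_eq ▸ hI.smul hη0, ?_, ?_⟩
  · rw [hPplus, hη_inv, kalman_posterior_eq_inv_information hPpred_det hR_det hS_det]
  · rw [hsplus, hσplus, ← Matrix.smul_mulVec, ← Matrix.smul_mul, ← Matrix.smul_mul, hη_inv,
      kalmanGain_eq_inv_information_mul hPpred_det hR_det hS_det]

/-- One step of the pure fading-memory extended Kalman filter coincides with one step of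
the online natural gradient in the chart of the current state, for the Gaussian
observation model `y = h(s, u) + N(0, R)`. -/
theorem ekf_step_is_natural_gradient_step
    (n m d : ℕ) (hn : 0 < n) (hm : 0 < m) (hd : 0 < d)
    (f : (Fin n → ℝ) → (Fin d → ℝ) → (Fin n → ℝ))
    (h : (Fin n → ℝ) → (Fin d → ℝ) → (Fin m → ℝ))
    (hf : ∀ u, Differentiable ℝ (fun s => f s u))
    (hh : ∀ u, Differentiable ℝ (fun s => h s u))
    (R : Matrix (Fin m) (Fin m) ℝ) (hR : R.PosDef)
    (u : Fin d → ℝ) (y : Fin m → ℝ)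
    (α : ℝ) (hα : 0 ≤ α)
    (ηprev η : ℝ) (hηprev : 0 < ηprev) (hη0 : 0 < η) (hη1 : η < 1)
    (hηrec : 1 / η = 1 / ((1 + α) * ηprev) + 1)
    (s : Fin n → ℝ) (P : Matrix (Fin n) (Fin n) ℝ) (hP : P.PosDef)
    (J : Matrix (Fin n) (Fin n) ℝ) (hJ : J = ηprev • P⁻¹)
    -- one step of the pure fading-memory extended Kalman filter
    (spred : Fin n → ℝ) (hspred : spred = f s u)
    (F : Matrix (Fin n) (Fin n) ℝ) (hF : F = jacobian (fun x => f x u) s)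
    (hFinv : IsUnit F)
    (Ppred : Matrix (Fin n) (Fin n) ℝ) (hPpred : Ppred = (1 + α) • (F * P * Fᵀ))
    (yhat : Fin m → ℝ) (hyhat : yhat = h spred u)
    (H : Matrix (Fin m) (Fin n) ℝ) (hH : H = jacobian (fun x => h x u) spred)
    (K : Matrix (Fin n) (Fin m) ℝ) (hK : K = Ppred * Hᵀ * (H * Ppred * Hᵀ + R)⁻¹)
    (Pplus : Matrix (Fin n) (Fin n) ℝ) (hPplus : Pplus = (1 - K * H) * Ppred)
    (splus : Fin n → ℝ) (hsplus : splus = spred + K.mulVec (y - yhat))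
    -- one step of the online natural gradient
    (J' : Matrix (Fin n) (Fin n) ℝ) (hJ' : J' = (F⁻¹)ᵀ * J * F⁻¹)
    (Jplus : Matrix (Fin n) (Fin n) ℝ)
    (hJplus : Jplus = (1 - η) • J' + η • (Hᵀ * R⁻¹ * H))
    (σplus : Fin n → ℝ)
    (hσplus : σplus = spred + η • (Jplus⁻¹ * Hᵀ * R⁻¹).mulVec (y - yhat)) :
    Jplus.PosDef ∧ Pplus = η • Jplus⁻¹ ∧ splus = σplus :=
  ekf_step_is_natural_gradient_step_general n m R hR y α hα ηprev η hηprev hη0 hηrec P hP J hJ spred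
    F hFinv Ppred hPpred yhat H K hK Pplus hPplus splus hsplus J' hJ' Jplus hJplus σplus hσplus
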